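/- Let f be a firm with strongly monotone responsive preferences and capacity c_f > p_f. Under the firm-proposing deferred acceptance algorithm, f can strictly improve by reducing its capacity if and only if the worker-optimal and firm-optimal stable matchings of the at-peak instance I^{p_f} assign different sets of workers to f; and when they differ, the improvement is achieved by reporting capacity exactly p_f. -/

import Mathlib

/-- A many-to-one matching instance: firms `F` with capacities, workers `W`,
strict preferences of workers over `Option F` (`none` = unmatched), strict
preferences of firms over individual workers (`Option W`, `none` = keeping a
seat empty) together with a responsive extension to sets of workers. -/
structure MTO (F W : Type) [DecidableEq W] where
  cap : F → ℕ
  /-- `wlt w a b` : worker `w` strictly prefers `a` to `b`. -/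
  wlt : W → Option F → Option F → Prop
  wlt_trans : ∀ w a b c, wlt w a b → wlt w b c → wlt w a c
  wlt_irrefl : ∀ w a, ¬ wlt w a a
  wlt_trichot : ∀ w a b, a = b ∨ wlt w a b ∨ wlt w b a
  /-- `flt1 f a b` : firm `f` strictly prefers (single) worker option `a` to `b`. -/
  flt1 : F → Option W → Option W → Prop
  flt1_trans : ∀ f a b c, flt1 f a b → flt1 f b c → flt1 f a c
  flt1_irrefl : ∀ f a, ¬ flt1 f a a
  flt1_trichot : ∀ f a b, a = b ∨ flt1 f a b ∨ flt1 f b a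
  /-- `flt f S T` : firm `f` strictly prefers the set `S` to the set `T`
  (responsive extension of `flt1`). -/
  flt : F → Finset W → Finset W → Prop
  flt_trans : ∀ f S T U, flt f S T → flt f T U → flt f S U
  flt_irrefl : ∀ f S, ¬ flt f S S
  resp_add : ∀ f (S : Finset W) (w : W), w ∉ S →
    (flt f (insert w S) S ↔ flt1 f (some w) none)
  resp_swap : ∀ f (S : Finset W) (w w' : W), w ∉ S → w' ∉ S → w ≠ w' →
    (flt f (insert w S) (insert w' S) ↔ flt1 f (some w) (some w'))

variable {F W : Type} [DecidableEq W] [DecidableEq F] [Fintype W]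

/-- The set of workers matched to firm `f` under the matching `μ`. -/
def matchedSet (μ : W → Option F) (f : F) : Finset W :=
  Finset.univ.filter (fun w => μ w = some f)

/-- `μ` respects all capacity constraints. -/
def MTO.isMatching (I : MTO F W) (μ : W → Option F) : Prop :=
  ∀ f, (matchedSet μ f).card ≤ I.cap f

/-- No agent is matched to an unacceptable partner. -/
def MTO.indivRational (I : MTO F W) (μ : W → Option F) : Prop :=
  (∀ w f, μ w = some f → ¬ I.wlt w none (some f)) ∧
  (∀ w f, μ w = some f → ¬ I.flt1 f none (some w))

/-- The worker-firm pair `(w, f)` blocks `μ`. -/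
def MTO.blocks (I : MTO F W) (μ : W → Option F) (w : W) (f : F) : Prop :=
  I.wlt w (some f) (μ w) ∧
  ∃ S ⊆ matchedSet μ f, (insert w S).card ≤ I.cap f ∧
    I.flt f (insert w S) (matchedSet μ f)

/-- Stability: a feasible, individually rational matching with no blocking pair. -/
def MTO.isStable (I : MTO F W) (μ : W → Option F) : Prop :=
  I.isMatching μ ∧ I.indivRational μ ∧ ∀ w f, ¬ I.blocks μ w f

/-- `μ` is the worker-optimal stable matching (output of WPDA). -/
def MTO.workerOptimal (I : MTO F W) (μ : W → Option F) : Prop :=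
  I.isStable μ ∧ ∀ μ', I.isStable μ' → ∀ w, μ' w = μ w ∨ I.wlt w (μ w) (μ' w)

/-- `μ` is the firm-optimal stable matching (output of FPDA). -/
def MTO.firmOptimal (I : MTO F W) (μ : W → Option F) : Prop :=
  I.isStable μ ∧ ∀ μ', I.isStable μ' → ∀ f,
    matchedSet μ' f = matchedSet μ f ∨ I.flt f (matchedSet μ f) (matchedSet μ' f)

/-- The instance obtained from `I` by setting the capacity of firm `f` to `b`. -/
def MTO.withCap (I : MTO F W) (f : F) (b : ℕ) : MTO F W :=
  { I with cap := Function.update I.cap f b }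

/-- The peak of firm `f`: the largest number of workers matched to `f` in any
stable matching for any choice of `f`'s capacity. -/
noncomputable def MTO.peak (I : MTO F W) (f : F) : ℕ :=
  sSup {n | ∃ b μ, (I.withCap f b).isStable μ ∧ (matchedSet μ f).card = n}

/-- `w` proposes to `f` at some point of WPDA, where `μ` is the worker-optimal
stable matching (i.e. the WPDA outcome): `w` finds `f` acceptable and `f` is
weakly preferred by `w` to its final WPDA match. -/
def MTO.proposesTo (I : MTO F W) (μ : W → Option F) (w : W) (f : F) : Prop :=
  I.wlt w (some f) none ∧ (μ w = some f ∨ I.wlt w (some f) (μ w))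

/-- All workers in `S` are acceptable to `f`. -/
def MTO.acceptableSet (I : MTO F W) (f : F) (S : Finset W) : Prop :=
  ∀ w ∈ S, ¬ I.flt1 f none (some w)

/-- Strongly monotone preferences: any larger acceptable set is strictly
preferred to any smaller acceptable set. -/
def MTO.stronglyMonotone (I : MTO F W) (f : F) : Prop :=
  ∀ S T : Finset W, I.acceptableSet f S → I.acceptableSet f T →
    T.card < S.card → I.flt f S T

/-!
Let `J` be the instance in which `f` has capacity `p = peak f`. A stable matching of `I` gives `f`
at most `p` workers, so it stays stable in `J`. All stable matchings of `J` give `f` the same number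
of workers, namely `p`; since `f` still has a free seat in `I`, a worker of `μW(f)` missing from
`μ(f)` would block `μ` in `I`. Hence `μ(f) = μW(f)`. Reporting `p` yields `μF(f)`, which `f` weakly
prefers to `μW(f)`, strictly iff the two differ. No capacity does better than `μF(f)`: at capacities
`≥ p` the outcome is stable in `J`, where `μF` is firm-optimal, and at capacities `< p` the firm gets
fewer than `p` workers, which strong monotonicity ranks below `μF(f)`.
-/

open Finset

theorem card_fiber_eq_of_forall_card_fiber_le {α β : Type*} [Fintype α] [DecidableEq β]
    {u v : α → β} (h : ∀ b, #{a | u a = b} ≤ #{a | v a = b}) (b : β) :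
    #{a | u a = b} = #{a | v a = b} := by
  set t := insert b (univ.image u ∪ univ.image v)
  have hu : #(univ : Finset α) = ∑ c ∈ t, #{a | u a = c} :=
    card_eq_sum_card_fiberwise fun a _ => by simp [t]
  have hv : #(univ : Finset α) = ∑ c ∈ t, #{a | v a = c} :=
    card_eq_sum_card_fiberwise fun a _ => by simp [t]
  exact (sum_eq_sum_iff_of_le fun c _ => h c).1 (hu.symm.trans hv) b (mem_insert_self b _)

omit [DecidableEq W] in
theorem mem_matchedSet {μ : W → Option F} {w : W} {g : F} :
    w ∈ matchedSet μ g ↔ μ w = some g := by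
  simp [matchedSet]

namespace MTO

omit [DecidableEq F] [Fintype W] in
theorem flt_asymm {I : MTO F W} {g : F} {S T : Finset W} (h : I.flt g S T) : ¬ I.flt g T S :=
  fun h' => I.flt_irrefl g S (I.flt_trans g S T S h h')

section WithCapBasic

omit [Fintype W]

variable {I : MTO F W} {f : F} {b p : ℕ}

theorem withCap_cap_self : (I.withCap f b).cap f = b := by
  simp [withCap]

theorem withCap_withCap : (I.withCap f b).withCap f p = I.withCap f p := by
  simp [withCap]

theorem withCap_eq_self : I.withCap f (I.cap f) = I := by
  cases I
  simp [withCap]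

end WithCapBasic

section Stability

variable {I : MTO F W} {μ μW μ' : W → Option F} {w : W} {g : F}

theorem isStable.flt1_some_none (h : I.isStable μ) (hw : w ∈ matchedSet μ g) :
    I.flt1 g (some w) none := by
  rcases I.flt1_trichot g (some w) none with h' | h' | h'
  · simp at h'
  · exact h'
  · exact absurd h' (h.2.1.2 w g (mem_matchedSet.1 hw))

theorem isStable.acceptableSet (h : I.isStable μ) : I.acceptableSet g (matchedSet μ g) :=
  fun w hw => h.2.1.2 w g (mem_matchedSet.1 hw)

theorem blocks_of_card_lt_cap (hw : w ∉ matchedSet μ g) (hpref : I.wlt w (some g) (μ w))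
    (hacc : I.flt1 g (some w) none) (hroom : #(matchedSet μ g) < I.cap g) :
    I.blocks μ w g :=
  ⟨hpref, matchedSet μ g, subset_rfl, by rw [card_insert_of_notMem hw]; omega,
    (I.resp_add g _ w hw).2 hacc⟩

theorem workerOptimal.wlt_of_mem_of_notMem (hW : I.workerOptimal μW) (h' : I.isStable μ')
    (hw : w ∈ matchedSet μW g) (hw' : w ∉ matchedSet μ' g) : I.wlt w (some g) (μ' w) := by
  rw [mem_matchedSet] at hw hw'
  rcases hW.2 μ' h' w with h | h
  · exact absurd (h.trans hw) hw'
  · rwa [hw] at h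

theorem workerOptimal.card_matchedSet_le (hW : I.workerOptimal μW) (h' : I.isStable μ')
    (g : F) : #(matchedSet μW g) ≤ #(matchedSet μ' g) := by
  by_contra! hlt
  obtain ⟨w, hw, hw'⟩ := exists_mem_notMem_of_card_lt_card hlt
  exact h'.2.2 w g (blocks_of_card_lt_cap hw' (hW.wlt_of_mem_of_notMem h' hw hw')
    (hW.1.flt1_some_none hw) (hlt.trans_le (hW.1.1 g)))

theorem workerOptimal.eq_none_of_eq_none (hW : I.workerOptimal μW) (h' : I.isStable μ')
    (hw : μW w = none) : μ' w = none := by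
  rcases hW.2 μ' h' w with h | h
  · rwa [← h] at hw
  · rw [hw] at h
    cases hμ' : μ' w with
    | none => rfl
    | some g => exact absurd (hμ' ▸ h) (h'.2.1.1 w g hμ')

/-- A weak form of the rural hospitals theorem. -/
theorem workerOptimal.card_matchedSet_eq (hW : I.workerOptimal μW) (h' : I.isStable μ')
    (g : F) : #(matchedSet μ' g) = #(matchedSet μW g) := by
  have hfiber : ∀ o : Option F, #{w | μW w = o} ≤ #{w | μ' w = o} := by
    rintro (_ | g)
    · exact card_le_card fun w hw => by
        simpa using hW.eq_none_of_eq_none h' (by simpa using hw)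
    · exact hW.card_matchedSet_le h' g
  exact (card_fiber_eq_of_forall_card_fiber_le hfiber (some g)).symm

end Stability

section WithCap

variable {I : MTO F W} {μ μW μF : W → Option F} {f : F} {b p : ℕ}

theorem isStable.withCap (h : I.isStable μ) (hcard : #(matchedSet μ f) ≤ p)
    (hp : p ≤ I.cap f) : (I.withCap f p).isStable μ := by
  have hcap : ∀ g, (I.withCap f p).cap g ≤ I.cap g := by
    intro g
    by_cases hg : g = f <;> simp [MTO.withCap, hg, hp]
  refine ⟨fun g => ?_, h.2.1, fun w g ⟨hpref, S, hS, hSc, hflt⟩ =>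
    h.2.2 w g ⟨hpref, S, hS, hSc.trans (hcap g), hflt⟩⟩
  by_cases hg : g = f
  · subst hg
    simpa [MTO.withCap] using hcard
  · simpa [MTO.withCap, hg] using h.1 g

theorem isStable.card_matchedSet_le_withCap (h : (I.withCap f b).isStable μ) :
    #(matchedSet μ f) ≤ b :=
  (h.1 f).trans_eq withCap_cap_self

theorem isStable.withCap_of_le (h : (I.withCap f b).isStable μ) (hcard : #(matchedSet μ f) ≤ p)
    (hp : p ≤ b) : (I.withCap f p).isStable μ := by
  simpa only [withCap_withCap] using h.withCap hcard (hp.trans_eq withCap_cap_self.symm)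

theorem bddAbove_peak_set :
    BddAbove {n | ∃ b μ, (I.withCap f b).isStable μ ∧ #(matchedSet μ f) = n} :=
  ⟨Fintype.card W, by rintro n ⟨b, μ, -, rfl⟩; exact card_le_univ _⟩

theorem isStable.card_matchedSet_le_peak (h : (I.withCap f b).isStable μ) :
    #(matchedSet μ f) ≤ I.peak f :=
  le_csSup bddAbove_peak_set ⟨b, μ, h, rfl⟩

theorem workerOptimal.card_matchedSet_eq_peak
    (hW : (I.withCap f (I.peak f)).workerOptimal μW)
    (h : (I.withCap f (I.peak f)).isStable μ) : #(matchedSet μ f) = I.peak f := by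
  obtain ⟨b, μ', hμ', hcard⟩ : I.peak f ∈ {n | ∃ b μ, (I.withCap f b).isStable μ ∧
      #(matchedSet μ f) = n} := Nat.sSup_mem ⟨_, _, μW, hW.1, rfl⟩ bddAbove_peak_set
  have hμ'peak : (I.withCap f (I.peak f)).isStable μ' :=
    hμ'.withCap_of_le hcard.le (hcard ▸ hμ'.card_matchedSet_le_withCap)
  rw [hW.card_matchedSet_eq h, ← hW.card_matchedSet_eq hμ'peak, hcard]

theorem workerOptimal.matchedSet_eq_of_lt_cap (hW : (I.withCap f p).workerOptimal μW)
    (h : I.isStable μ) (hcard : #(matchedSet μ f) ≤ p) (hp : p < I.cap f) :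
    matchedSet μW f = matchedSet μ f := by
  have hμp := h.withCap hcard hp.le
  refine eq_of_subset_of_card_le (fun w hw => ?_) (hW.card_matchedSet_eq hμp f).le
  by_contra hw'
  exact h.2.2 w f (blocks_of_card_lt_cap hw' (hW.wlt_of_mem_of_notMem hμp hw hw')
    (hW.1.flt1_some_none hw) (hcard.trans_lt hp))

theorem not_flt_matchedSet_firmOptimal_peak (hsm : I.stronglyMonotone f)
    (hW : (I.withCap f (I.peak f)).workerOptimal μW)
    (hF : (I.withCap f (I.peak f)).firmOptimal μF) (hb : (I.withCap f b).isStable μ) :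
    ¬ I.flt f (matchedSet μ f) (matchedSet μF f) := by
  intro himp
  rcases le_or_gt (I.peak f) b with hpb | hbp
  · have hμ : (I.withCap f (I.peak f)).isStable μ :=
      hb.withCap_of_le hb.card_matchedSet_le_peak hpb
    rcases hF.2 μ hμ f with heq | hbetter
    · exact I.flt_irrefl f _ (heq ▸ himp)
    · exact flt_asymm himp hbetter
  · have hlt : #(matchedSet μ f) < #(matchedSet μF f) := by
      rw [hW.card_matchedSet_eq_peak hF.1]
      exact hb.card_matchedSet_le_withCap.trans_lt hbp
    exact flt_asymm himp (hsm _ _ hF.1.acceptableSet hb.acceptableSet hlt)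

end WithCap

end MTO

/-- For a firm with strongly monotone preferences and capacity above its peak,
under FPDA (which outputs the firm-optimal stable matching) the firm can
strictly improve by reducing its capacity iff the worker-optimal and
firm-optimal stable matchings of the at-peak instance assign it different sets
of workers; when they differ, reporting capacity exactly the peak achieves the
improvement. -/
theorem strongly_monotone_delete_above_peak_fpda_iff
    {F W : Type} [DecidableEq W] [DecidableEq F] [Fintype W]
    (I : MTO F W) (f : F)
    (hsm : I.stronglyMonotone f)
    (hpeak : I.peak f < I.cap f)
    (μ μW μF : W → Option F)
    (hμ : I.firmOptimal μ)
    (hW : (I.withCap f (I.peak f)).workerOptimal μW)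
    (hF : (I.withCap f (I.peak f)).firmOptimal μF) :
    ((∃ b < I.cap f, ∃ μb, (I.withCap f b).firmOptimal μb ∧
        I.flt f (matchedSet μb f) (matchedSet μ f)) ↔
      matchedSet μW f ≠ matchedSet μF f) ∧
    (matchedSet μW f ≠ matchedSet μF f →
      I.flt f (matchedSet μF f) (matchedSet μ f)) := by
  have hμ_cap : (I.withCap f (I.cap f)).isStable μ := by
    rw [MTO.withCap_eq_self]
    exact hμ.1
  have hμ_le : #(matchedSet μ f) ≤ I.peak f := hμ_cap.card_matchedSet_le_peak
  have hWμ : matchedSet μW f = matchedSet μ f := hW.matchedSet_eq_of_lt_cap hμ.1 hμ_le hpeak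
  have improve (hne : matchedSet μW f ≠ matchedSet μF f) :
      I.flt f (matchedSet μF f) (matchedSet μ f) :=
    (hF.2 μ (hμ.1.withCap hμ_le hpeak.le) f).resolve_left fun h => hne (hWμ.trans h)
  refine ⟨⟨?_, fun hne => ⟨I.peak f, hpeak, μF, hF, improve hne⟩⟩, improve⟩
  rintro ⟨b, -, μb, hμb, himp⟩ heq
  exact MTO.not_flt_matchedSet_firmOptimal_peak hsm hW hF hμb.1 (hWμ.symm.trans heq ▸ himp)
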